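/- arXiv:2404.07639 — 2 statements merged into one kernel-verified Lean document; each statement's English description precedes it below -/
import Mathlib

section
/- Let R be a commutative Noetherian integral domain, n a positive integer, and M a finitely generated R[n]-module. Let t_M : M → M^{∨∨} be the canonical evaluation map into the double dual. Then the cokernel of t_M is a torsion R[n]-module: every element of coker(t_M) is annihilated by some non-zero-divisor of R[n]. -/
open Polynomial

noncomputable section

/-- The primitive multiple ring `R[n] = R[t]/(t^n)`. -/
abbrev Rn (R : Type*) [CommRing R] (n : ℕ) : Type _ :=
  Polynomial R ⧸ Ideal.span {(X : Polynomial R) ^ n}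

/-- The class `t` of the variable in `R[n]`. -/
def tn (R : Type*) [CommRing R] (n : ℕ) : Rn R n :=
  Ideal.Quotient.mk _ X

/-- `R[k] = R[n]/(t^k)` as an `R[n]`-module (for `k ≤ n` this is `R[t]/(t^k)`
with the `R[n]`-module structure coming from the natural surjection `R[n] → R[k]`). -/
abbrev Rmod (R : Type*) [CommRing R] (n k : ℕ) : Type _ :=
  Rn R n ⧸ (Ideal.span {tn R n ^ k})

/-- The constant term homomorphism `R[n] → R` (for `n > 0`). -/
def ct (R : Type*) [CommRing R] (n : ℕ) (hn : 0 < n) : Rn R n →+* R :=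
  Ideal.Quotient.lift _ (evalRingHom 0) (by
    intro a ha
    rw [Ideal.mem_span_singleton] at ha
    obtain ⟨c, rfl⟩ := ha
    simp [zero_pow hn.ne'])

section Modules

variable (R : Type*) [CommRing R] (n : ℕ) (M : Type*) [AddCommGroup M] [Module (Rn R n) M]

/-- The submodule `M_i = t^i M` of an `R[n]`-module `M`. -/
def tMi (i : ℕ) : Submodule (Rn R n) M :=
  LinearMap.range (LinearMap.lsmul (Rn R n) M (tn R n ^ i))

/-- The submodule `M^{(i)} = {m ∈ M : t^i m = 0}` of an `R[n]`-module `M`. -/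
def kt (i : ℕ) : Submodule (Rn R n) M :=
  LinearMap.ker (LinearMap.lsmul (Rn R n) M (tn R n ^ i))

/-- `G_i(M) = t^i M / t^{i+1} M`. -/
abbrev Gi (i : ℕ) :=
  (tMi R n M i) ⧸ (Submodule.comap (tMi R n M i).subtype (tMi R n M (i + 1)))

/-- `G^{(i+1)}(M) = M^{(i+1)}/M^{(i)}` (note the shift by one in the indexing:
`Gup R n M i` is `G^{(i+1)}(M)`). -/
abbrev Gup (i : ℕ) :=
  (kt R n M (i + 1)) ⧸ (Submodule.comap (kt R n M (i + 1)).subtype (kt R n M i))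

lemma tMi_succ_mem {i : ℕ} {x : M} (hx : x ∈ tMi R n M i) :
    tn R n • x ∈ tMi R n M (i + 1) := by
  obtain ⟨m, rfl⟩ := hx
  exact ⟨m, by simp [LinearMap.lsmul_apply, smul_smul, pow_succ']⟩

lemma kt_pred_mem {i : ℕ} {x : M} (hx : x ∈ kt R n M (i + 1)) :
    tn R n • x ∈ kt R n M i := by
  simp only [kt, LinearMap.mem_ker, LinearMap.lsmul_apply] at hx ⊢
  rw [smul_smul, ← pow_succ]
  exact hx

/-- `μ_i : G_i(M) → G_{i+1}(M)`, induced by multiplication by `t`. -/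
def muMap (i : ℕ) : Gi R n M i →ₗ[Rn R n] Gi R n M (i + 1) :=
  Submodule.mapQ _ _
    (LinearMap.restrict (LinearMap.lsmul (Rn R n) M (tn R n))
      (fun _ hx => tMi_succ_mem R n M hx))
    (fun x hx => by
      simp only [Submodule.mem_comap] at hx ⊢
      exact tMi_succ_mem R n M hx)

/-- `λ_{i+1} : G^{(i+2)}(M) → G^{(i+1)}(M)`, induced by multiplication by `t`
(with the shifted indexing, `lamMap R n M i : Gup (i+1) → Gup i`). -/
def lamMap (i : ℕ) : Gup R n M (i + 1) →ₗ[Rn R n] Gup R n M i :=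
  Submodule.mapQ _ _
    (LinearMap.restrict (LinearMap.lsmul (Rn R n) M (tn R n))
      (fun _ hx => kt_pred_mem R n M hx))
    (fun x hx => by
      simp only [Submodule.mem_comap] at hx ⊢
      exact kt_pred_mem R n M hx)

/-- The composition `μ_{k-1} ∘ ... ∘ μ_0 : G_0(M) → G_k(M)`. -/
def muComp : (k : ℕ) → (Gi R n M 0 →ₗ[Rn R n] Gi R n M k)
  | 0 => LinearMap.id
  | (k + 1) => (muMap R n M k).comp (muComp k)

/-- The composition `λ_1 ∘ ... ∘ λ_k : G^{(k+1)}(M) → G^{(1)}(M)`. -/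
def lamComp : (k : ℕ) → (Gup R n M k →ₗ[Rn R n] Gup R n M 0)
  | 0 => LinearMap.id
  | (k + 1) => (lamComp k).comp (lamMap R n M k)

end Modules

/-! The coefficient `τ` of `t^(n-1)` is a Frobenius form on `R[n]`: `a ↦ τ (a * -)` is an
`R`-linear isomorphism `R[n] ≃ Hom_R(R[n], R)`. Hence `φ ↦ τ ∘ φ` identifies `Hom_{R[n]}(N, R[n])`
with `Hom_R(N, R)` for every `R[n]`-module `N`, compatibly with evaluation, and the cokernel of
`t_M` becomes the cokernel of `M → M**` over `R`, where `M` is finite. Over the Noetherian domain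
`R` that cokernel dies after localizing at `R⁰`, since duals of finitely presented modules commute
with localization and finite-dimensional vector spaces are reflexive. Finally, a nonzero `r : R`
stays a non-zero-divisor in the free `R`-module `R[n]`. -/

open scoped nonZeroDivisors
open Module

theorem Module.isTorsion_dual_dual_quotient_range_eval {R : Type*} [CommRing R] [IsDomain R]
    [IsNoetherianRing R] (M : Type*) [AddCommGroup M] [Module R M] [Module.Finite R M] :
    IsTorsion R (Dual R (Dual R M) ⧸ LinearMap.range (Dual.eval R M)) := by
  let K := FractionRing R
  let f := LocalizedModule.mkLinearMap R⁰ M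
  let g := Algebra.linearMap R K
  have := Module.finitePresentation_of_finite R M
  have := Module.finitePresentation_of_finite R (Dual R M)
  let dual₁ := IsLocalizedModule.mapExtendScalars R⁰ f g K
  let dual₂ := IsLocalizedModule.mapExtendScalars R⁰ dual₁ g K
  have hloc : IsLocalizedModule.map R⁰ f dual₂ (Dual.eval R M) =
      (Dual.eval K (LocalizedModule R⁰ M)).restrictScalars R := by
    refine IsLocalizedModule.linearMap_ext R⁰ f dual₂ (LinearMap.ext fun m => ?_)
    refine LinearMap.restrictScalars_injective R
      (IsLocalizedModule.linearMap_ext R⁰ dual₁ g (LinearMap.ext fun φ => ?_))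
    simp [dual₁, dual₂, IsLocalizedModule.map_apply]
  have hsurj : Function.Surjective (LocalizedModule.map R⁰ (Dual.eval R M)) := by
    rw [← IsLocalizedModule.map_surjective_iff_localizedModuleMap_surjective f dual₂, hloc]
    exact (evalEquiv K (LocalizedModule R⁰ M)).surjective
  intro x
  obtain ⟨r, hr, hx⟩ := LocalizedModule.subsingleton_iff.mp
    ((LinearMap.localizedMap_surjective_iff_subsingleton_localized_coker R⁰ _).mp hsurj) x
  exact ⟨⟨r, hr⟩, hx⟩

lemma algebraMap_mem_nonZeroDivisors_of_flat {R A : Type*} [CommRing R] [CommRing A] [Algebra R A]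
    [Module.Flat R A] {r : R} (hr : r ∈ R⁰) : algebraMap R A r ∈ A⁰ :=
  isRegular_iff_mem_nonZeroDivisors.mp <| isLeftRegular_iff_isRegular.mp <|
    (isSMulRegular_algebraMap_iff A).mpr (Module.Flat.isSMulRegular_of_nonZeroDivisors hr)

section Frobenius

variable {R A : Type*} [CommRing R] [CommRing A] [Algebra R A] (τ : A →ₗ[R] R)
variable (N : Type*) [AddCommGroup N] [Module A N] [Module R N] [IsScalarTower R A N]

def Module.Dual.compForm : Dual A N →ₗ[R] Dual R N :=
  LinearMap.llcomp R N A R τ ∘ₗ LinearMap.restrictScalarsₗ R A N A R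

@[simp]
lemma Module.Dual.compForm_apply (φ : Dual A N) (x : N) : Dual.compForm τ N φ x = τ (φ x) := rfl

variable {τ} (hτ : Function.Bijective ((LinearMap.mul R A).compr₂ τ))
include hτ

lemma Module.Dual.compForm_injective : Function.Injective (Dual.compForm τ N) := by
  refine (injective_iff_map_eq_zero _).mpr fun φ hφ => LinearMap.ext fun x => hτ.1 ?_
  refine LinearMap.ext fun a => ?_
  have h := LinearMap.congr_fun hφ (a • x)
  rw [compForm_apply, map_smul, smul_eq_mul] at h
  simpa [mul_comm] using h

lemma Module.Dual.compForm_surjective : Function.Surjective (Dual.compForm τ N) := by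
  intro f
  let e := LinearEquiv.ofBijective _ hτ
  let ψ (x : N) : A := e.symm (f ∘ₗ (LinearMap.toSpanSingleton A N x).restrictScalars R)
  have hψ (x : N) (a : A) : τ (ψ x * a) = f (a • x) :=
    LinearMap.congr_fun (e.apply_symm_apply _) a
  let φ : Dual A N :=
    { toFun := ψ
      map_add' x y := hτ.1 <| LinearMap.ext fun a => by simp [hψ, smul_add]
      map_smul' b x := hτ.1 <| LinearMap.ext fun a => by
        change τ (ψ (b • x) * a) = τ (b * ψ x * a)
        rw [hψ, mul_comm b, mul_assoc, hψ, ← mul_smul, mul_comm] }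
  refine ⟨φ, LinearMap.ext fun x => ?_⟩
  change τ (ψ x) = f x
  simpa using hψ x 1

def Module.Dual.equivOfBijective : Dual A N ≃ₗ[R] Dual R N :=
  .ofBijective (Dual.compForm τ N) ⟨Dual.compForm_injective N hτ, Dual.compForm_surjective N hτ⟩

def Module.Dual.dualEquivOfBijective : Dual A (Dual A N) ≃ₗ[R] Dual R (Dual R N) :=
  (Dual.equivOfBijective (Dual A N) hτ).trans (Dual.equivOfBijective N hτ).symm.dualMap

lemma Module.Dual.dualEquivOfBijective_eval (x : N) :
    Dual.dualEquivOfBijective N hτ (Dual.eval A N x) = Dual.eval R N x := by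
  ext φ
  exact LinearMap.congr_fun ((Dual.equivOfBijective N hτ).apply_symm_apply φ) x

theorem Module.isTorsion_dual_dual_quotient_range_eval_of_bijective [IsDomain R]
    [IsNoetherianRing R] [Module.Flat R A] [Module.Finite R N] :
    IsTorsion A (Dual A (Dual A N) ⧸ LinearMap.range (Dual.eval A N)) := by
  intro x
  obtain ⟨ξ, rfl⟩ := Submodule.Quotient.mk_surjective _ x
  let Ψ := Dual.dualEquivOfBijective N hτ
  have htors := isTorsion_dual_dual_quotient_range_eval (R := R) N
  obtain ⟨⟨r, hr⟩, hrξ⟩ := @htors (Submodule.Quotient.mk (Ψ ξ))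
  rw [Submonoid.mk_smul, ← Submodule.Quotient.mk_smul, Submodule.Quotient.mk_eq_zero] at hrξ
  obtain ⟨m, hm⟩ := hrξ
  have : r • ξ = Dual.eval A N m :=
    Ψ.injective (by rw [map_smul, ← hm, Dual.dualEquivOfBijective_eval])
  refine ⟨⟨algebraMap R A r, algebraMap_mem_nonZeroDivisors_of_flat hr⟩, ?_⟩
  rw [Submonoid.mk_smul, ← Submodule.Quotient.mk_smul, algebraMap_smul, this,
    Submodule.Quotient.mk_eq_zero]
  exact LinearMap.mem_range_self _ m

end Frobenius

namespace Rn

variable {R : Type*} [CommRing R] {n : ℕ}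

lemma mk_eq_zero_iff (p : R[X]) :
    Ideal.Quotient.mk (Ideal.span {(X : R[X]) ^ n}) p = 0 ↔ X ^ n ∣ p := by
  rw [Ideal.Quotient.eq_zero_iff_mem, Ideal.mem_span_singleton]

lemma tn_pow (k : ℕ) : tn R n ^ k = Ideal.Quotient.mk _ (X ^ k) := by
  simp [tn]

instance : Module.Free R (Rn R n) := (monic_X_pow n).free_quotient

instance : Module.Finite R (Rn R n) := (monic_X_pow n).finite_quotient

variable (R n) in
def topCoeff : Rn R n →ₗ[R] R :=
  lcoeff R (n - 1) ∘ₗ AdjoinRoot.modByMonicHom (monic_X_pow n)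

lemma topCoeff_mk (hn : 0 < n) (p : R[X]) :
    topCoeff R n (Ideal.Quotient.mk _ p) = p.coeff (n - 1) := by
  change (p %ₘ X ^ n).coeff (n - 1) = _
  rw [modByMonic_eq_sub_mul_div p (X ^ n), coeff_sub, mul_comm, coeff_mul_X_pow',
    if_neg (by omega), sub_zero]

lemma topCoeff_tn_pow (hn : 0 < n) (k : ℕ) :
    topCoeff R n (tn R n ^ k) = if k = n - 1 then 1 else 0 := by
  rw [tn_pow, topCoeff_mk hn, coeff_X_pow]
  exact if_congr eq_comm rfl rfl

lemma eq_zero_of_forall_topCoeff_tn_pow_mul (hn : 0 < n) {a : Rn R n}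
    (h : ∀ k, topCoeff R n (tn R n ^ k * a) = 0) : a = 0 := by
  obtain ⟨p, rfl⟩ := Ideal.Quotient.mk_surjective a
  rw [mk_eq_zero_iff, X_pow_dvd_iff]
  intro d hd
  obtain ⟨k, hk⟩ : ∃ k, n - 1 = d + k := ⟨n - 1 - d, by omega⟩
  have := h k
  rwa [tn_pow, ← map_mul, topCoeff_mk hn, hk, coeff_X_pow_mul] at this

lemma bijective_mul_compr₂_topCoeff (hn : 0 < n) :
    Function.Bijective ((LinearMap.mul R (Rn R n)).compr₂ (topCoeff R n)) := by
  constructor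
  · refine (injective_iff_map_eq_zero _).mpr fun a ha =>
      eq_zero_of_forall_topCoeff_tn_pow_mul hn fun k => ?_
    simpa [mul_comm] using LinearMap.congr_fun ha (tn R n ^ k)
  · intro g
    refine ⟨∑ k ∈ Finset.range n, g (tn R n ^ k) • tn R n ^ (n - 1 - k),
      (AdjoinRoot.powerBasis' (monic_X_pow n)).basis.ext fun i => ?_⟩
    have hi : (i : ℕ) < n := i.2.trans_le (natDegree_X_pow_le n)
    rw [PowerBasis.coe_basis, AdjoinRoot.powerBasis'_gen]
    change topCoeff R n ((∑ k ∈ Finset.range n, g (tn R n ^ k) • tn R n ^ (n - 1 - k)) *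
      tn R n ^ (i : ℕ)) = g (tn R n ^ (i : ℕ))
    simp only [Finset.sum_mul, smul_mul_assoc, ← pow_add, map_sum, map_smul, topCoeff_tn_pow hn,
      smul_eq_mul, mul_ite, mul_one, mul_zero]
    calc _ = ∑ k ∈ Finset.range n, if k = (i : ℕ) then g (tn R n ^ k) else 0 :=
          Finset.sum_congr rfl fun k hk => if_congr (by rw [Finset.mem_range] at hk; omega) rfl rfl
      _ = g (tn R n ^ (i : ℕ)) := by rw [Finset.sum_ite_eq', if_pos (Finset.mem_range.2 hi)]

end Rn

/-- The cokernel of the canonical map `t_M : M → M^{∨∨}` of a finitely generated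
`R[n]`-module `M` into its double dual is a torsion module: every element is
annihilated by a non-zero-divisor of `R[n]`. -/
theorem coker_eval_isTorsion
    {R : Type*} [CommRing R] [IsDomain R] [IsNoetherianRing R]
    (n : ℕ) (hn : 0 < n)
    (M : Type*) [AddCommGroup M] [Module (Rn R n) M] [Module.Finite (Rn R n) M] :
    Module.IsTorsion (Rn R n)
      (Module.Dual (Rn R n) (Module.Dual (Rn R n) M) ⧸
        LinearMap.range (Module.Dual.eval (Rn R n) M)) := by
  let : Module R M := Module.compHom M (algebraMap R (Rn R n))
  have : IsScalarTower R (Rn R n) M := IsScalarTower.of_compHom R (Rn R n) M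
  have : Module.Finite R M := .trans (Rn R n) M
  exact isTorsion_dual_dual_quotient_range_eval_of_bijective M (Rn.bijective_mul_compr₂_topCoeff hn)
end
end

section
/- Let R be a commutative Noetherian integral domain, n a positive integer, and M a finitely generated R[n]-module. Then M is balanced if and only if M_i = M^{(n-i)} for every 1 ≤ i ≤ n, i.e. t^i M = {m ∈ M : t^{n-i} m = 0} for every 1 ≤ i ≤ n. -/
/-! Since `M^{(0)} = 0`, the composite `λ_1 ∘ ⋯ ∘ λ_{n-1}` is induced by `x ↦ t^{n-1} x` on
`M^{(n)} = M`, so `M` is balanced iff `M^{(1)} ⊆ t^{n-1} M`. This inclusion propagates to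
`M^{(j)} ⊆ t^{n-j} M` by induction on `j`, and `t^i M ⊆ M^{(n-i)}` always holds as `t^n = 0`. -/

open Polynomial

noncomputable section

section Balanced

variable {R : Type*} [CommRing R] {n : ℕ}

theorem tn_pow_self : tn R n ^ n = 0 := by
  rw [tn, ← map_pow, Ideal.Quotient.eq_zero_iff_mem]
  exact Ideal.subset_span rfl

variable {M : Type*} [AddCommGroup M] [Module (Rn R n) M]

theorem mem_kt {i : ℕ} {x : M} : x ∈ kt R n M i ↔ tn R n ^ i • x = 0 := Iff.rfl

theorem kt_zero : kt R n M 0 = ⊥ := by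
  ext x
  simp [mem_kt]

theorem kt_self : kt R n M n = ⊤ :=
  eq_top_iff.2 fun x _ => by rw [mem_kt, tn_pow_self]; exact zero_smul (Rn R n) x

theorem pow_smul_mem_kt {i k : ℕ} {x : M} (hx : x ∈ kt R n M (i + k)) :
    tn R n ^ k • x ∈ kt R n M i := by
  rwa [mem_kt, smul_smul, ← pow_add]

theorem tMi_antitone {i j : ℕ} (h : i ≤ j) : tMi R n M j ≤ tMi R n M i := by
  rintro _ ⟨m, rfl⟩
  obtain ⟨d, rfl⟩ := Nat.exists_eq_add_of_le h
  exact ⟨tn R n ^ d • m, by simp only [LinearMap.lsmul_apply, smul_smul, pow_add]⟩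

theorem tMi_le_kt {i : ℕ} (h : i ≤ n) : tMi R n M i ≤ kt R n M (n - i) := by
  rintro _ ⟨m, rfl⟩
  rw [mem_kt, LinearMap.lsmul_apply, smul_smul, ← pow_add, Nat.sub_add_cancel h, tn_pow_self]
  exact zero_smul (Rn R n) m

theorem lamComp_mk (k : ℕ) (x : M) (hx : x ∈ kt R n M (k + 1)) :
    lamComp R n M k (Submodule.Quotient.mk ⟨x, hx⟩) =
      Submodule.Quotient.mk ⟨tn R n ^ k • x, pow_smul_mem_kt (by rwa [add_comm])⟩ := by
  induction k generalizing x with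
  | zero => simp only [lamComp, pow_zero, one_smul, LinearMap.id_apply]
  | succ k ih =>
    have hmap : lamMap R n M k (Submodule.Quotient.mk ⟨x, hx⟩) =
        Submodule.Quotient.mk ⟨tn R n • x, kt_pred_mem R n M hx⟩ := rfl
    rw [lamComp, LinearMap.comp_apply, hmap, ih]
    simp only [smul_smul, ← pow_succ]

theorem Gup_zero_mk_eq_mk_iff {x y : M} (hx : x ∈ kt R n M 1) (hy : y ∈ kt R n M 1) :
    (Submodule.Quotient.mk ⟨x, hx⟩ : Gup R n M 0) = Submodule.Quotient.mk ⟨y, hy⟩ ↔ x = y := by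
  simp [Submodule.Quotient.eq, kt_zero, sub_eq_zero]

theorem surjective_lamComp_iff (k : ℕ) :
    Function.Surjective (lamComp R n M k) ↔
      kt R n M 1 ≤ (kt R n M (k + 1)).map (LinearMap.lsmul (Rn R n) M (tn R n ^ k)) := by
  constructor
  · intro h y hy
    obtain ⟨q, hq⟩ := h (Submodule.Quotient.mk ⟨y, hy⟩)
    obtain ⟨⟨x, hx⟩, rfl⟩ := Submodule.Quotient.mk_surjective _ q
    rw [lamComp_mk, Gup_zero_mk_eq_mk_iff] at hq
    exact ⟨x, hx, hq⟩
  · intro h q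
    obtain ⟨⟨y, hy⟩, rfl⟩ := Submodule.Quotient.mk_surjective _ q
    obtain ⟨x, hx, rfl⟩ := h hy
    exact ⟨Submodule.Quotient.mk ⟨x, hx⟩, by rw [lamComp_mk]; rfl⟩

theorem surjective_lamComp_pred_iff (hn : 0 < n) :
    Function.Surjective (lamComp R n M (n - 1)) ↔ kt R n M 1 ≤ tMi R n M (n - 1) := by
  rw [surjective_lamComp_iff, Nat.sub_add_cancel hn, kt_self, Submodule.map_top]
  rfl

/-- Peeling off one factor of `t` at a time: if `t x = t^(k+1) m`, then `x - t^k m` is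
`t`-torsion, hence lies in `t^(n-1) M ⊆ t^k M`. -/
theorem kt_le_tMi_of_kt_one_le (h : kt R n M 1 ≤ tMi R n M (n - 1)) {j k : ℕ} (hjk : j + k = n) :
    kt R n M j ≤ tMi R n M k := by
  induction j generalizing k with
  | zero => simp [kt_zero]
  | succ j ih =>
    intro x hx
    obtain ⟨m, hm⟩ := ih (k := k + 1) (by omega) (kt_pred_mem R n M hx)
    rw [LinearMap.lsmul_apply, pow_succ', ← smul_smul] at hm
    have hker : x - tn R n ^ k • m ∈ kt R n M 1 := by
      rw [mem_kt, pow_one, smul_sub, hm, sub_self]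
    obtain ⟨m', hm'⟩ := tMi_antitone (by omega : k ≤ n - 1) (h hker)
    refine ⟨m' + m, ?_⟩
    rw [LinearMap.lsmul_apply] at hm' ⊢
    rw [smul_add, hm', sub_add_cancel]

end Balanced

theorem balanced_iff_tMi_eq_kt_general
    {R : Type*} [CommRing R]
    (n : ℕ) (hn : 0 < n)
    (M : Type*) [AddCommGroup M] [Module (Rn R n) M] :
    Function.Surjective (lamComp R n M (n - 1)) ↔
      ∀ i : ℕ, 1 ≤ i → i ≤ n → tMi R n M i = kt R n M (n - i) := by
  rw [surjective_lamComp_pred_iff hn]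
  refine ⟨fun h i _ hin => (tMi_le_kt hin).antisymm (kt_le_tMi_of_kt_one_le h (by omega)),
    fun h => ?_⟩
  rcases Nat.lt_or_ge 1 n with hn1 | hn1
  · have h1 := h (n - 1) (by omega) (by omega)
    rw [show n - (n - 1) = 1 by omega] at h1
    exact h1.ge
  · obtain rfl : n = 1 := by omega
    exact fun x _ => ⟨x, by simp⟩

/-- A finitely generated `R[n]`-module `M` is balanced (i.e. the composition
`𝛌(M) = λ_1 ∘ ... ∘ λ_{n-1} : G^{(n)}(M) → G^{(1)}(M)` is surjective) iff
`t^i M = {m ∈ M : t^{n-i} m = 0}` for every `1 ≤ i ≤ n`. -/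
theorem balanced_iff_tMi_eq_kt
    {R : Type*} [CommRing R] [IsDomain R] [IsNoetherianRing R]
    (n : ℕ) (hn : 0 < n)
    (M : Type*) [AddCommGroup M] [Module (Rn R n) M] [Module.Finite (Rn R n) M] :
    Function.Surjective (lamComp R n M (n - 1)) ↔
      ∀ i : ℕ, 1 ≤ i → i ≤ n → tMi R n M i = kt R n M (n - i) :=
  balanced_iff_tMi_eq_kt_general n hn M
end
end
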